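/- arXiv:2106.10895 — 9 statements merged into one kernel-verified Lean document; each statement's English description precedes it below -/
import Mathlib

section
/- A finite strict poset P is an interval order if and only if it has an interval representation: a pair of functions b,e : P → ℝ with b(x) ≤ e(x) for all x, such that y < z in P if and only if e(y) < b(z) in ℝ. -/
/-- A finite strict poset is an interval order iff it has an interval
representation by closed real intervals. -/
theorem interval_order_iff_interval_representation (α : Type) [Finite α]
    (lt : α → α → Prop) (hirrefl : ∀ x, ¬ lt x x)
    (htrans : ∀ x y z, lt x y → lt y z → lt x z) :
    (∀ w x y z, lt w y → lt x z → lt w z ∨ lt x y) ↔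
      ∃ b e : α → ℝ, (∀ x, b x ≤ e x) ∧ (∀ y z, lt y z ↔ e y < b z) := by
  classical
  cases nonempty_fintype α
  constructor
  · intro h
    set D : α → Finset α := fun x => Finset.univ.filter (fun y => lt y x) with hDdef
    have hmemD : ∀ y x, y ∈ D x ↔ lt y x := by intro y x; simp [hDdef]
    -- down-sets are totally ordered by inclusion
    have htot : ∀ x y, D x ⊆ D y ∨ D y ⊆ D x := by
      intro x y
      by_contra hc
      push_neg at hc
      obtain ⟨w, hw1, hw2⟩ := Finset.not_subset.mp hc.1
      obtain ⟨v, hv1, hv2⟩ := Finset.not_subset.mp hc.2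
      rw [hmemD] at hw1 hw2
      rw [hmemD] at hv1 hv2
      rcases h w v x y hw1 hv1 with h' | h'
      · exact hw2 h'
      · exact hv2 h'
    set bn : α → ℕ := fun x => (Finset.univ.filter (fun z => D z ⊂ D x)).card with hbn
    have hsmono : ∀ {x y}, D x ⊂ D y → bn x < bn y := by
      intro x y hxy
      apply Finset.card_lt_card
      have hsub : (Finset.univ.filter (fun z => D z ⊂ D x)) ⊆
          (Finset.univ.filter (fun z => D z ⊂ D y)) := by
        intro z hz
        simp only [Finset.mem_filter, Finset.mem_univ, true_and] at hz ⊢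
        exact hz.trans hxy
      rw [Finset.ssubset_iff_of_subset hsub]
      refine ⟨x, ?_, ?_⟩
      · simp only [Finset.mem_filter, Finset.mem_univ, true_and]
        exact hxy
      · simp only [Finset.mem_filter, Finset.mem_univ, true_and]
        exact fun hh => (lt_irrefl (D x)) hh
    have hDle : ∀ z' z, bn z' ≤ bn z → D z' ⊆ D z := by
      intro z' z hle
      rcases htot z' z with h' | h'
      · exact h'
      · rcases eq_or_ne (D z) (D z') with he | hne
        · rw [he]
        · exact absurd (hsmono (lt_of_le_of_ne h' hne)) (not_lt.mpr hle)
    have hDlt : ∀ {y z}, lt y z → bn y < bn z := by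
      intro y z hyz
      apply hsmono
      constructor
      · intro w hw
        rw [hmemD] at hw ⊢
        exact htrans w y z hw hyz
      · intro hsub
        exact hirrefl y ((hmemD y y).mp (hsub ((hmemD y z).mpr hyz)))
    set b : α → ℝ := fun x => (bn x : ℝ) with hbdef
    set N : ℝ := (Fintype.card α : ℝ) with hN
    have hbN : ∀ x, b x ≤ N := by
      intro x
      have : bn x ≤ Fintype.card α := by
        rw [hbn]
        exact le_trans (Finset.card_filter_le _ _) (le_of_eq Finset.card_univ)
      show (bn x : ℝ) ≤ (Fintype.card α : ℝ)
      exact_mod_cast this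
    set S : α → Finset α := fun y => Finset.univ.filter (fun z => lt y z) with hSdef
    have hmemS : ∀ z y, z ∈ S y ↔ lt y z := by intro z y; simp [hSdef]
    set e : α → ℝ := fun y =>
      if hS : (S y).Nonempty then (S y).inf' hS b - 1/2 else N with hedef
    refine ⟨b, e, ?_, ?_⟩
    · intro x
      rw [hedef]
      by_cases hS : (S x).Nonempty
      · simp only [hS, dif_pos]
        obtain ⟨z0, hz0, heq⟩ := Finset.exists_mem_eq_inf' hS b
        rw [heq]
        have hlt : bn x < bn z0 := hDlt ((hmemS z0 x).mp hz0)
        have : (bn x : ℝ) + 1 ≤ (bn z0 : ℝ) := by exact_mod_cast hlt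
        rw [hbdef]
        simp only
        linarith
      · simp only [hS, dif_neg, not_false_iff]
        exact hbN x
    · intro y z
      constructor
      · intro hyz
        have hS : (S y).Nonempty := ⟨z, (hmemS z y).mpr hyz⟩
        rw [hedef]
        simp only [hS, dif_pos]
        have h1 : (S y).inf' hS b ≤ b z := Finset.inf'_le b ((hmemS z y).mpr hyz)
        linarith
      · intro hlt
        rw [hedef] at hlt
        by_cases hS : (S y).Nonempty
        · simp only [hS, dif_pos] at hlt
          obtain ⟨z0, hz0, heq⟩ := Finset.exists_mem_eq_inf' hS b
          rw [heq] at hlt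
          have hle : bn z0 ≤ bn z := by
            have : (bn z0 : ℝ) < (bn z : ℝ) + 1 := by
              rw [hbdef] at hlt; simp only at hlt; linarith
            exact_mod_cast Nat.lt_add_one_iff.mp (by exact_mod_cast this)
          have hsub : D z0 ⊆ D z := hDle z0 z hle
          have hy : y ∈ D z0 := (hmemD y z0).mpr ((hmemS z0 y).mp hz0)
          exact (hmemD y z).mp (hsub hy)
        · simp only [hS, dif_neg, not_false_iff] at hlt
          exact absurd (lt_of_le_of_lt (hbN z) hlt) (lt_irrefl _)
  · rintro ⟨b, e, hbe, hiff⟩ w x y z hwy hxz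
    by_contra hc
    push_neg at hc
    obtain ⟨h1, h2⟩ := hc
    rw [hiff] at hwy hxz h1 h2
    push_neg at h1 h2
    have := hbe w
    have := hbe x
    have := hbe y
    have := hbe z
    linarith
end

section
/- The gluing composition of two iposets is associative up to isomorphism: for iposets P : n → m, Q : m → k, R : k → l, we have (P * Q) * R ≅ P * (Q * R). -/
/-- Interval order condition for a strict order relation. -/
def IsIntervalOrderRel {α : Type} (lt : α → α → Prop) : Prop :=
  ∀ w x y z, lt w y → lt x z → lt w z ∨ lt x y

/-- Serial composition (ordinal sum) of two strict orders. -/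
def serialLt {α β : Type} (r : α → α → Prop) (s : β → β → Prop) :
    α ⊕ β → α ⊕ β → Prop
  | .inl a, .inl b => r a b
  | .inr a, .inr b => s a b
  | .inl _, .inr _ => True
  | .inr _, .inl _ => False

/-- Parallel composition (disjoint union) of two strict orders. -/
def parallelLt {α β : Type} (r : α → α → Prop) (s : β → β → Prop) :
    α ⊕ β → α ⊕ β → Prop
  | .inl a, .inl b => r a b
  | .inr a, .inr b => s a b
  | _, _ => False

/-- A poset with interfaces: a finite strict poset with injective interface
maps from the discrete posets `[n]` (onto minimal elements) and `[m]` (onto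
maximal elements). -/
structure Iposet (n m : ℕ) where
  carrier : Type
  fin : Finite carrier
  lt : carrier → carrier → Prop
  irrefl : ∀ x, ¬ lt x x
  trans : ∀ x y z, lt x y → lt y z → lt x z
  s : Fin n → carrier
  t : Fin m → carrier
  s_inj : Function.Injective s
  t_inj : Function.Injective t
  s_min : ∀ i x, ¬ lt x (s i)
  t_max : ∀ i x, ¬ lt (t i) x

namespace Iposet

/-- Parallel composition of iposets. -/
def par {n₁ m₁ n₂ m₂ : ℕ} (P : Iposet n₁ m₁) (Q : Iposet n₂ m₂) :
    Iposet (n₁ + n₂) (m₁ + m₂) where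
  carrier := P.carrier ⊕ Q.carrier
  fin := by have := P.fin; have := Q.fin; exact inferInstance
  lt a b := match a, b with
    | .inl x, .inl y => P.lt x y
    | .inr x, .inr y => Q.lt x y
    | _, _ => False
  irrefl := by
    rintro (x | x) h
    · exact P.irrefl x h
    · exact Q.irrefl x h
  trans := by
    rintro (x | x) (y | y) (z | z) h1 h2 <;>
      first
        | exact P.trans _ _ _ h1 h2
        | exact Q.trans _ _ _ h1 h2
        | exact h1.elim
        | exact h2.elim
  s := fun i =>
    if h : (i : ℕ) < n₁ then .inl (P.s ⟨i, h⟩)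
    else .inr (Q.s ⟨(i : ℕ) - n₁, by have := i.isLt; omega⟩)
  t := fun i =>
    if h : (i : ℕ) < m₁ then .inl (P.t ⟨i, h⟩)
    else .inr (Q.t ⟨(i : ℕ) - m₁, by have := i.isLt; omega⟩)
  s_inj := by
    intro i j h
    rcases Nat.lt_or_ge (i : ℕ) n₁ with hi | hi <;>
      rcases Nat.lt_or_ge (j : ℕ) n₁ with hj | hj
    · simp only [dif_pos hi, dif_pos hj] at h
      have h2 := P.s_inj (Sum.inl.inj h)
      simp only [Fin.mk.injEq] at h2
      exact Fin.ext h2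
    · simp only [dif_pos hi, dif_neg (Nat.not_lt.mpr hj)] at h
      exact absurd h (by simp)
    · simp only [dif_neg (Nat.not_lt.mpr hi), dif_pos hj] at h
      exact absurd h (by simp)
    · simp only [dif_neg (Nat.not_lt.mpr hi), dif_neg (Nat.not_lt.mpr hj)] at h
      have h2 := Q.s_inj (Sum.inr.inj h)
      simp only [Fin.mk.injEq] at h2
      exact Fin.ext (by omega)
  t_inj := by
    intro i j h
    rcases Nat.lt_or_ge (i : ℕ) m₁ with hi | hi <;>
      rcases Nat.lt_or_ge (j : ℕ) m₁ with hj | hj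
    · simp only [dif_pos hi, dif_pos hj] at h
      have h2 := P.t_inj (Sum.inl.inj h)
      simp only [Fin.mk.injEq] at h2
      exact Fin.ext h2
    · simp only [dif_pos hi, dif_neg (Nat.not_lt.mpr hj)] at h
      exact absurd h (by simp)
    · simp only [dif_neg (Nat.not_lt.mpr hi), dif_pos hj] at h
      exact absurd h (by simp)
    · simp only [dif_neg (Nat.not_lt.mpr hi), dif_neg (Nat.not_lt.mpr hj)] at h
      have h2 := Q.t_inj (Sum.inr.inj h)
      simp only [Fin.mk.injEq] at h2
      exact Fin.ext (by omega)
  s_min := by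
    intro i a
    rcases Nat.lt_or_ge (i : ℕ) n₁ with hi | hi
    · simp only [dif_pos hi]
      rcases a with x | x
      · exact P.s_min _ x
      · exact fun h => h
    · simp only [dif_neg (Nat.not_lt.mpr hi)]
      rcases a with x | x
      · exact fun h => h
      · exact Q.s_min _ x
  t_max := by
    intro i a
    rcases Nat.lt_or_ge (i : ℕ) m₁ with hi | hi
    · simp only [dif_pos hi]
      rcases a with x | x
      · exact P.t_max _ x
      · exact fun h => h
    · simp only [dif_neg (Nat.not_lt.mpr hi)]
      rcases a with x | x
      · exact fun h => h
      · exact Q.t_max _ x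

open Classical in
/-- Gluing composition of iposets: targets of `P` are identified with sources
of `Q`, and every non-target point of `P` is ordered below every non-source
point of `Q`. -/
noncomputable def glue {n m k : ℕ} (P : Iposet n m) (Q : Iposet m k) :
    Iposet n k where
  carrier := P.carrier ⊕ {q : Q.carrier // ¬ ∃ j, Q.s j = q}
  fin := by have := P.fin; have := Q.fin; exact inferInstance
  lt a b := match a, b with
    | .inl x, .inl y => P.lt x y
    | .inl x, .inr q => (¬ ∃ i, P.t i = x) ∨ (∃ i, P.t i = x ∧ Q.lt (Q.s i) q.val)
    | .inr p, .inr q => Q.lt p.val q.val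
    | .inr _, .inl _ => False
  irrefl := by
    rintro (x | q) h
    · exact P.irrefl x h
    · exact Q.irrefl q.val h
  trans := by
    rintro (x | x) (y | y) (z | z) h1 h2
    · exact P.trans _ _ _ h1 h2
    · left; rintro ⟨j, rfl⟩; exact P.t_max j y h1
    · exact h2.elim
    · rcases h1 with h1 | ⟨i, hi, hlt⟩
      · exact Or.inl h1
      · exact Or.inr ⟨i, hi, Q.trans _ _ _ hlt h2⟩
    · exact h1.elim
    · exact h1.elim
    · exact h2.elim
    · exact Q.trans _ _ _ h1 h2
  s := fun i => .inl (P.s i)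
  t := fun i =>
    if h : ∃ j, Q.s j = Q.t i then .inl (P.t h.choose) else .inr ⟨Q.t i, h⟩
  s_inj := fun i j h => P.s_inj (Sum.inl.inj h)
  t_inj := by
    intro i j h
    by_cases hi : ∃ a, Q.s a = Q.t i <;> by_cases hj : ∃ a, Q.s a = Q.t j
    · simp only [dif_pos hi, dif_pos hj] at h
      have h2 := P.t_inj (Sum.inl.inj h)
      apply Q.t_inj
      rw [← hi.choose_spec, ← hj.choose_spec, h2]
    · simp only [dif_pos hi, dif_neg hj] at h
      exact absurd h (by simp)
    · simp only [dif_neg hi, dif_pos hj] at h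
      exact absurd h (by simp)
    · simp only [dif_neg hi, dif_neg hj, Sum.inr.injEq, Subtype.mk.injEq] at h
      exact Q.t_inj h
  s_min := by
    rintro i (x | q) h
    · exact P.s_min i x h
    · exact h
  t_max := by
    intro i a
    by_cases hi : ∃ j, Q.s j = Q.t i
    · simp only [dif_pos hi]
      rcases a with x | q
      · exact P.t_max _ x
      · rintro (h | ⟨i', hi', hlt⟩)
        · exact h ⟨hi.choose, rfl⟩
        · have he : i' = hi.choose := P.t_inj hi'
          subst he
          rw [hi.choose_spec] at hlt
          exact Q.t_max i q.val hlt
    · simp only [dif_neg hi]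
      rcases a with x | q
      · exact fun h => h
      · exact fun h => Q.t_max i q.val h

/-- The empty iposet. -/
def ipoEmpty : Iposet 0 0 where
  carrier := PEmpty
  fin := inferInstance
  lt _ _ := False
  irrefl _ h := h
  trans := by intro x; exact x.elim
  s := Fin.elim0
  t := Fin.elim0
  s_inj := by intro i; exact i.elim0
  t_inj := by intro i; exact i.elim0
  s_min := fun i => i.elim0
  t_max := fun i => i.elim0

/-- The singleton iposet with empty source and empty target interface. -/
def ipo00 : Iposet 0 0 where
  carrier := PUnit
  fin := inferInstance
  lt _ _ := False
  irrefl _ h := h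
  trans := by intro _ _ _ h; exact h.elim
  s := Fin.elim0
  t := Fin.elim0
  s_inj := by intro i; exact i.elim0
  t_inj := by intro i; exact i.elim0
  s_min := fun i => i.elim0
  t_max := fun i => i.elim0

/-- The singleton iposet with empty source and full target interface. -/
def ipo01 : Iposet 0 1 where
  carrier := PUnit
  fin := inferInstance
  lt _ _ := False
  irrefl _ h := h
  trans := by intro _ _ _ h; exact h.elim
  s := Fin.elim0
  t := fun _ => PUnit.unit
  s_inj := by intro i; exact i.elim0
  t_inj := by intro i j _; exact Subsingleton.elim i j
  s_min := fun i => i.elim0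
  t_max := fun _ _ h => h

/-- The singleton iposet with full source and empty target interface. -/
def ipo10 : Iposet 1 0 where
  carrier := PUnit
  fin := inferInstance
  lt _ _ := False
  irrefl _ h := h
  trans := by intro _ _ _ h; exact h.elim
  s := fun _ => PUnit.unit
  t := Fin.elim0
  s_inj := by intro i j _; exact Subsingleton.elim i j
  t_inj := by intro i; exact i.elim0
  s_min := fun _ _ h => h
  t_max := fun i => i.elim0

/-- The singleton iposet with full source and full target interface. -/
def ipo11 : Iposet 1 1 where
  carrier := PUnit
  fin := inferInstance
  lt _ _ := False
  irrefl _ h := h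
  trans := by intro _ _ _ h; exact h.elim
  s := fun _ => PUnit.unit
  t := fun _ => PUnit.unit
  s_inj := by intro i j _; exact Subsingleton.elim i j
  t_inj := by intro i j _; exact Subsingleton.elim i j
  s_min := fun _ _ h => h
  t_max := fun _ _ h => h

/-- The identity iposet `n → n`: the discrete poset on `n` points with both
interface maps the identity. -/
def ipoId (n : ℕ) : Iposet n n where
  carrier := Fin n
  fin := inferInstance
  lt _ _ := False
  irrefl _ h := h
  trans := by intro _ _ _ h; exact h.elim
  s := id
  t := id
  s_inj := fun _ _ h => h
  t_inj := fun _ _ h => h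
  s_min := fun _ _ h => h
  t_max := fun _ _ h => h

/-- Isomorphism of iposets: an order-preserving and order-reflecting bijection
commuting with the interface maps (the interface arities must agree). -/
def Iso {n m n' m' : ℕ} (P : Iposet n m) (Q : Iposet n' m') : Prop :=
  n = n' ∧ m = m' ∧
  ∃ f : P.carrier ≃ Q.carrier,
    (∀ x y, P.lt x y ↔ Q.lt (f x) (f y)) ∧
    (∀ (i : Fin n) (j : Fin n'), (i : ℕ) = (j : ℕ) → f (P.s i) = Q.s j) ∧
    (∀ (i : Fin m) (j : Fin m'), (i : ℕ) = (j : ℕ) → f (P.t i) = Q.t j)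

/-- `Subsu P Q` : `P` is subsumed by `Q`, i.e. there is an interface-preserving
order-reflecting bijection from `P` to `Q`. -/
def Subsu {n m : ℕ} (P Q : Iposet n m) : Prop :=
  ∃ f : P.carrier ≃ Q.carrier,
    (∀ x y, Q.lt (f x) (f y) → P.lt x y) ∧
    (∀ i, f (P.s i) = Q.s i) ∧ (∀ i, f (P.t i) = Q.t i)

/-- Isomorphism of the underlying posets, ignoring interfaces. -/
def PosetIso {n m n' m' : ℕ} (P : Iposet n m) (Q : Iposet n' m') : Prop :=
  ∃ f : P.carrier ≃ Q.carrier, ∀ x y, P.lt x y ↔ Q.lt (f x) (f y)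

/-- An iposet is discrete if its order relation is empty. -/
def IsDiscrete {n m : ℕ} (P : Iposet n m) : Prop := ∀ x y, ¬ P.lt x y

/-- A starter is a discrete iposet whose target interface map is bijective. -/
def IsStarter {n m : ℕ} (P : Iposet n m) : Prop :=
  IsDiscrete P ∧ Function.Bijective P.t

/-- A terminator is a discrete iposet whose source interface map is bijective. -/
def IsTerminator {n m : ℕ} (P : Iposet n m) : Prop :=
  IsDiscrete P ∧ Function.Bijective P.s

/-- A symmetry is a discrete iposet with both interface maps bijective. -/
def IsSymmetry {n m : ℕ} (P : Iposet n m) : Prop :=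
  IsDiscrete P ∧ Function.Bijective P.s ∧ Function.Bijective P.t

/-- Interface consistency: for points lying in both interfaces, the numbering
of the source interface agrees with that of the target interface. -/
def InterfaceConsistent {n m : ℕ} (P : Iposet n m) : Prop :=
  ∀ (i j : Fin n) (i' j' : Fin m),
    P.s i = P.t i' → P.s j = P.t j' → ((i : ℕ) < (j : ℕ) ↔ (i' : ℕ) < (j' : ℕ))

/-- An iposet is connected if its underlying poset is nonempty and any two
points are joined by a zigzag of order relations. -/
def Connected {n m : ℕ} (P : Iposet n m) : Prop :=
  Nonempty P.carrier ∧
    ∀ x y, Relation.ReflTransGen (fun a b => P.lt a b ∨ P.lt b a) x y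

/-- The interval order condition on the underlying poset of an iposet. -/
def IsIntervalOrder {n m : ℕ} (P : Iposet n m) : Prop :=
  ∀ w x y z, P.lt w y → P.lt x z → P.lt w z ∨ P.lt x y

/-- The class of gluing-parallel iposets: generated (up to isomorphism) from
the empty iposet and the four singleton iposets by gluing and parallel
composition. -/
inductive IsGP : {n m : ℕ} → Iposet n m → Prop
  | empty : IsGP ipoEmpty
  | s00 : IsGP ipo00
  | s01 : IsGP ipo01
  | s10 : IsGP ipo10
  | s11 : IsGP ipo11
  | glue {n m k : ℕ} {P : Iposet n m} {Q : Iposet m k} :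
      IsGP P → IsGP Q → IsGP (P.glue Q)
  | par {n₁ m₁ n₂ m₂ : ℕ} {P : Iposet n₁ m₁} {Q : Iposet n₂ m₂} :
      IsGP P → IsGP Q → IsGP (P.par Q)
  | iso {n m n' m' : ℕ} {P : Iposet n m} {Q : Iposet n' m'} :
      IsGP P → Iso P Q → IsGP Q

/-- The ⊗-closure of the four singleton iposets (up to isomorphism):
parallel compositions of finitely many singletons. -/
inductive InParSingles : {n m : ℕ} → Iposet n m → Prop
  | s00 : InParSingles ipo00
  | s01 : InParSingles ipo01
  | s10 : InParSingles ipo10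
  | s11 : InParSingles ipo11
  | par {n₁ m₁ n₂ m₂ : ℕ} {P : Iposet n₁ m₁} {Q : Iposet n₂ m₂} :
      InParSingles P → InParSingles Q → InParSingles (P.par Q)
  | iso {n m n' m' : ℕ} {P : Iposet n m} {Q : Iposet n' m'} :
      InParSingles P → Iso P Q → InParSingles Q

/-- The induced subiposet of a poset (iposet with empty interfaces) on a
subset of its points. -/
def restrict (P : Iposet 0 0) (A : Set P.carrier) : Iposet 0 0 where
  carrier := {x : P.carrier // x ∈ A}
  fin := by have := P.fin; exact inferInstance
  lt a b := P.lt a.val b.val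
  irrefl a := P.irrefl a.val
  trans := fun a b c h1 h2 => P.trans _ _ _ h1 h2
  s := Fin.elim0
  t := Fin.elim0
  s_inj := by intro i; exact i.elim0
  t_inj := by intro i; exact i.elim0
  s_min := fun i => i.elim0
  t_max := fun i => i.elim0

end Iposet

/-!
Both composites consist of the points of `P`, the non-source points of `Q` and the non-source
points of `R`, so reassociating the sums identifies their carriers. The only order relations
that differ syntactically are those from a point of `P` or `Q` up to a non-source point `r` of
`R`. Reading the gluing order as "`x` lies below `q` iff every interface point matched with `x`
lies below `q`" (`glue_lt_inl_inr`), for `x` in `P` both sides say: whenever `x = P.t i` and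
`Q.s i = Q.t j`, then `R.s j < r`.
-/

namespace Iposet

variable {n m k l : ℕ}

section Glue

variable (P : Iposet n m) (Q : Iposet m k)

theorem glue_s (i : Fin n) : (P.glue Q).s i = .inl (P.s i) := rfl

theorem glue_t_of_eq {i : Fin k} {j : Fin m} (h : Q.s j = Q.t i) :
    (P.glue Q).t i = .inl (P.t j) := by
  have hex : ∃ j, Q.s j = Q.t i := ⟨j, h⟩
  simp only [glue, dif_pos hex, Q.s_inj (hex.choose_spec.trans h.symm)]

theorem glue_t_of_not_exists {i : Fin k} (h : ¬ ∃ j, Q.s j = Q.t i) :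
    (P.glue Q).t i = .inr ⟨Q.t i, h⟩ := by
  simp only [glue, dif_neg h]

theorem glue_t_eq_inl_iff (i : Fin k) (x : P.carrier) :
    (P.glue Q).t i = .inl x ↔ ∃ j, P.t j = x ∧ Q.t i = Q.s j := by
  by_cases h : ∃ j, Q.s j = Q.t i
  · obtain ⟨j, hj⟩ := h
    rw [glue_t_of_eq P Q hj, ← hj]
    exact ⟨fun hx => ⟨j, Sum.inl.inj hx, rfl⟩,
      fun ⟨j', hx, hj'⟩ => congrArg Sum.inl (Q.s_inj hj' ▸ hx)⟩
  · rw [glue_t_of_not_exists P Q h]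
    exact ⟨fun hx => (Sum.inr_ne_inl hx).elim, fun ⟨j, _, hj⟩ => absurd ⟨j, hj.symm⟩ h⟩

theorem glue_t_eq_inr_iff (i : Fin k) (q : {q : Q.carrier // ¬ ∃ j, Q.s j = q}) :
    (P.glue Q).t i = .inr q ↔ Q.t i = q.val := by
  by_cases h : ∃ j, Q.s j = Q.t i
  · obtain ⟨j, hj⟩ := h
    rw [glue_t_of_eq P Q hj]
    exact ⟨fun hq => (Sum.inl_ne_inr hq).elim, fun hq => absurd ⟨j, hj.trans hq⟩ q.2⟩
  · rw [glue_t_of_not_exists P Q h]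
    exact ⟨fun hq => congrArg Subtype.val (Sum.inr.inj hq),
      fun hq => congrArg Sum.inr (Subtype.ext hq)⟩

theorem glue_lt_inl_inr (x : P.carrier) (q : {q : Q.carrier // ¬ ∃ j, Q.s j = q}) :
    (P.glue Q).lt (.inl x) (.inr q) ↔ ∀ i, P.t i = x → Q.lt (Q.s i) q.val := by
  show (¬ ∃ i, P.t i = x) ∨ (∃ i, P.t i = x ∧ Q.lt (Q.s i) q.val) ↔ _
  constructor
  · rintro (hx | ⟨i, rfl, hi⟩) j hj
    · exact absurd ⟨j, hj⟩ hx
    · exact P.t_inj hj ▸ hi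
  · intro hx
    by_cases h : ∃ i, P.t i = x
    · obtain ⟨i, hi⟩ := h
      exact .inr ⟨i, hi, hx i hi⟩
    · exact .inl h

end Glue

variable (P : Iposet n m) (Q : Iposet m k) (R : Iposet k l)

def glueAssocEquiv : ((P.glue Q).glue R).carrier ≃ (P.glue (Q.glue R)).carrier where
  toFun
    | .inl (.inl p) => .inl p
    | .inl (.inr q) => .inr ⟨.inl q.1, fun ⟨j, hj⟩ => q.2 ⟨j, Sum.inl.inj hj⟩⟩
    | .inr r => .inr ⟨.inr r, fun ⟨_, hj⟩ => Sum.inl_ne_inr hj⟩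
  invFun
    | .inl p => .inl (.inl p)
    | .inr ⟨.inl q, hq⟩ => .inl (.inr ⟨q, fun ⟨j, hj⟩ => hq ⟨j, congrArg Sum.inl hj⟩⟩)
    | .inr ⟨.inr r, _⟩ => .inr r
  left_inv := by rintro ((p | q) | r) <;> rfl
  right_inv := by rintro (p | ⟨q | r, h⟩) <;> rfl

theorem glueAssocEquiv_lt_iff (x y : ((P.glue Q).glue R).carrier) :
    ((P.glue Q).glue R).lt x y ↔
      (P.glue (Q.glue R)).lt (glueAssocEquiv P Q R x) (glueAssocEquiv P Q R y) := by
  rcases x with (p | q) | r <;> rcases y with (p' | q') | r' <;> try exact Iff.rfl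
  · refine (glue_lt_inl_inr (P.glue Q) R (.inl p) r').trans
      (Iff.trans ?_ (glue_lt_inl_inr P (Q.glue R) p _).symm)
    calc (∀ j, (P.glue Q).t j = .inl p → R.lt (R.s j) r'.1)
        ↔ ∀ i, P.t i = p → ∀ j, Q.t j = Q.s i → R.lt (R.s j) r'.1 := by
          simp only [glue_t_eq_inl_iff, forall_exists_index, and_imp]
          exact ⟨fun h i hi j hj => h j i hi hj, fun h j i hi hj => h i hi j hj⟩
      _ ↔ _ := forall₂_congr fun i _ => (glue_lt_inl_inr Q R (Q.s i) r').symm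
  · refine (glue_lt_inl_inr (P.glue Q) R (.inr q) r').trans
      (Iff.trans ?_ (glue_lt_inl_inr Q R q.1 r').symm)
    simp only [glue_t_eq_inr_iff]

theorem glueAssocEquiv_t (i : Fin l) :
    glueAssocEquiv P Q R (((P.glue Q).glue R).t i) = (P.glue (Q.glue R)).t i := by
  by_cases hR : ∃ j, R.s j = R.t i
  · obtain ⟨j, hj⟩ := hR
    have hQR : (Q.glue R).t i = .inl (Q.t j) := glue_t_of_eq Q R hj
    rw [glue_t_of_eq (P.glue Q) R hj]
    by_cases hQ : ∃ j', Q.s j' = Q.t j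
    · obtain ⟨j', hj'⟩ := hQ
      rw [glue_t_of_eq P Q hj', glue_t_of_eq P (Q.glue R) (by rw [hQR, glue_s, hj'])]
      rfl
    · have hQR' : ¬ ∃ j', (Q.glue R).s j' = (Q.glue R).t i := by
        rw [hQR]
        exact fun ⟨j', hj'⟩ => hQ ⟨j', Sum.inl.inj hj'⟩
      rw [glue_t_of_not_exists P Q hQ, glue_t_of_not_exists P (Q.glue R) hQR']
      exact congrArg Sum.inr (Subtype.ext hQR.symm)
  · have hQR : (Q.glue R).t i = .inr ⟨R.t i, hR⟩ := glue_t_of_not_exists Q R hR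
    have hQR' : ¬ ∃ j', (Q.glue R).s j' = (Q.glue R).t i := by
      rw [hQR]
      exact fun ⟨_, hj'⟩ => Sum.inl_ne_inr hj'
    rw [glue_t_of_not_exists (P.glue Q) R hR, glue_t_of_not_exists P (Q.glue R) hQR']
    exact congrArg Sum.inr (Subtype.ext hQR.symm)

end Iposet

open Iposet in
/-- Gluing composition of iposets is associative up to isomorphism. -/
theorem glue_assoc {n m k l : ℕ} (P : Iposet n m) (Q : Iposet m k)
    (R : Iposet k l) :
    Iso ((P.glue Q).glue R) (P.glue (Q.glue R)) :=
  ⟨rfl, rfl, glueAssocEquiv P Q R, glueAssocEquiv_lt_iff P Q R,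
    fun _ j hij => by rw [Fin.ext hij]; rfl,
    fun _ j hij => by rw [Fin.ext hij]; exact glueAssocEquiv_t P Q R j⟩
end

section
/- Lax interchange law for iposets: for iposets P : n₁ → m₁, Q : m₁ → k₁, P' : n₂ → m₂, Q' : m₂ → k₂, the iposet (P ⊗ P') * (Q ⊗ Q') is subsumed by (P * Q) ⊗ (P' * Q'); that is, there is an interface-preserving bijection from the former to the latter that reflects the order. -/
namespace Iposet

-- Auxiliary lemmas ------------------------------------------------------

section Aux

variable {a b c d : ℕ} (R : Iposet a b) (S : Iposet c d)

lemma par_s_lt (i : Fin (a + c)) (hi : (i : ℕ) < a) :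
    (R.par S).s i = Sum.inl (R.s ⟨i, hi⟩) := by
  simp only [Iposet.par, dif_pos hi]

lemma par_s_ge (i : Fin (a + c)) (hi : ¬ (i : ℕ) < a) :
    (R.par S).s i = Sum.inr (S.s ⟨(i : ℕ) - a, by have := i.isLt; omega⟩) := by
  simp only [Iposet.par, dif_neg hi]

lemma par_t_lt (i : Fin (b + d)) (hi : (i : ℕ) < b) :
    (R.par S).t i = Sum.inl (R.t ⟨i, hi⟩) := by
  simp only [Iposet.par, dif_pos hi]

lemma par_t_ge (i : Fin (b + d)) (hi : ¬ (i : ℕ) < b) :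
    (R.par S).t i = Sum.inr (S.t ⟨(i : ℕ) - b, by have := i.isLt; omega⟩) := by
  simp only [Iposet.par, dif_neg hi]

lemma par_s_inl_iff (q : R.carrier) :
    (∃ j, (R.par S).s j = Sum.inl q) ↔ ∃ j, R.s j = q := by
  constructor
  · rintro ⟨j, hj⟩
    by_cases h : (j : ℕ) < a
    · rw [par_s_lt R S j h] at hj
      exact ⟨⟨j, h⟩, Sum.inl.inj hj⟩
    · rw [par_s_ge R S j h] at hj
      exact absurd hj (by simp)
  · rintro ⟨j, hj⟩
    refine ⟨⟨(j : ℕ), by omega⟩, ?_⟩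
    rw [par_s_lt R S _ j.isLt]
    exact congrArg Sum.inl (by rw [← hj])

lemma par_s_inr_iff (q : S.carrier) :
    (∃ j, (R.par S).s j = Sum.inr q) ↔ ∃ j, S.s j = q := by
  constructor
  · rintro ⟨j, hj⟩
    by_cases h : (j : ℕ) < a
    · rw [par_s_lt R S j h] at hj
      exact absurd hj (by simp)
    · rw [par_s_ge R S j h] at hj
      exact ⟨_, Sum.inr.inj hj⟩
  · rintro ⟨j, hj⟩
    refine ⟨⟨a + (j : ℕ), by omega⟩, ?_⟩
    rw [par_s_ge R S _ (by simp)]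
    refine congrArg Sum.inr ?_
    rw [← hj]
    congr 1
    exact Fin.ext (by simp)

lemma par_t_inl_iff (q : R.carrier) :
    (∃ j, (R.par S).t j = Sum.inl q) ↔ ∃ j, R.t j = q := by
  constructor
  · rintro ⟨j, hj⟩
    by_cases h : (j : ℕ) < b
    · rw [par_t_lt R S j h] at hj
      exact ⟨⟨j, h⟩, Sum.inl.inj hj⟩
    · rw [par_t_ge R S j h] at hj
      exact absurd hj (by simp)
  · rintro ⟨j, hj⟩
    refine ⟨⟨(j : ℕ), by omega⟩, ?_⟩
    rw [par_t_lt R S _ j.isLt]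
    exact congrArg Sum.inl (by rw [← hj])

lemma par_t_inr_iff (q : S.carrier) :
    (∃ j, (R.par S).t j = Sum.inr q) ↔ ∃ j, S.t j = q := by
  constructor
  · rintro ⟨j, hj⟩
    by_cases h : (j : ℕ) < b
    · rw [par_t_lt R S j h] at hj
      exact absurd hj (by simp)
    · rw [par_t_ge R S j h] at hj
      exact ⟨_, Sum.inr.inj hj⟩
  · rintro ⟨j, hj⟩
    refine ⟨⟨b + (j : ℕ), by omega⟩, ?_⟩
    rw [par_t_ge R S _ (by simp)]
    refine congrArg Sum.inr ?_
    rw [← hj]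
    congr 1
    exact Fin.ext (by simp)

end Aux

section Main

variable {n₁ m₁ k₁ n₂ m₂ k₂ : ℕ}
  (P : Iposet n₁ m₁) (Q : Iposet m₁ k₁)
  (P' : Iposet n₂ m₂) (Q' : Iposet m₂ k₂)

/-- The carrier bijection for lax interchange. -/
noncomputable def interEquiv :
    ((P.par P').glue (Q.par Q')).carrier ≃ ((P.glue Q).par (P'.glue Q')).carrier where
  toFun x := match x with
    | .inl (.inl p) => .inl (.inl p)
    | .inl (.inr p') => .inr (.inl p')
    | .inr ⟨.inl q, h⟩ =>
        .inl (.inr ⟨q, fun hq => h ((par_s_inl_iff Q Q' q).mpr hq)⟩)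
    | .inr ⟨.inr q', h⟩ =>
        .inr (.inr ⟨q', fun hq => h ((par_s_inr_iff Q Q' q').mpr hq)⟩)
  invFun x := match x with
    | .inl (.inl p) => .inl (.inl p)
    | .inl (.inr ⟨q, h⟩) =>
        .inr ⟨.inl q, fun hq => h ((par_s_inl_iff Q Q' q).mp hq)⟩
    | .inr (.inl p') => .inl (.inr p')
    | .inr (.inr ⟨q', h⟩) =>
        .inr ⟨.inr q', fun hq => h ((par_s_inr_iff Q Q' q').mp hq)⟩
  left_inv := by rintro ((p | p) | ⟨q | q, h⟩) <;> rfl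
  right_inv := by rintro ((p | ⟨q, h⟩) | (p | ⟨q, h⟩)) <;> rfl

/-- Equation lemma for the source map of a gluing. -/
lemma glue_s' {a b c : ℕ} (R : Iposet a b) (S : Iposet b c) (i : Fin a) :
    (R.glue S).s i = Sum.inl (R.s i) := rfl

open Classical in
/-- Equation lemma for the target map of a gluing. -/
lemma glue_t' {a b c : ℕ} (R : Iposet a b) (S : Iposet b c) (i : Fin c) :
    (R.glue S).t i =
      if h : ∃ j, S.s j = S.t i then Sum.inl (R.t h.choose)
      else Sum.inr ⟨S.t i, h⟩ := rfl

end Main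

end Iposet

open Iposet in
/-- Lax interchange law: `(P ⊗ P') * (Q ⊗ Q')` is subsumed by
`(P * Q) ⊗ (P' * Q')`. -/
theorem lax_interchange {n₁ m₁ k₁ n₂ m₂ k₂ : ℕ}
    (P : Iposet n₁ m₁) (Q : Iposet m₁ k₁)
    (P' : Iposet n₂ m₂) (Q' : Iposet m₂ k₂) :
    Subsu ((P.par P').glue (Q.par Q')) ((P.glue Q).par (P'.glue Q')) := by
  refine ⟨interEquiv P Q P' Q', ?_, ?_, ?_⟩
  · -- order reflection
    rintro ((p₁ | p₁) | ⟨q₁ | q₁, h₁⟩) ((p₂ | p₂) | ⟨q₂ | q₂, h₂⟩) h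
    · exact h
    · exact h.elim
    · -- inl (inl p₁) vs inr ⟨inl q₂⟩
      rcases h with h | ⟨i, hi, hlt⟩
      · left
        rintro ⟨j, hj⟩
        exact h ((par_t_inl_iff P P' p₁).mp ⟨j, hj⟩)
      · right
        refine ⟨⟨(i : ℕ), by omega⟩, ?_, ?_⟩
        · rw [par_t_lt P P' _ i.isLt, ← hi]
        · rw [par_s_lt Q Q' _ i.isLt]
          have key : ∀ (j : Fin m₁), (j : ℕ) = (i : ℕ) → Q.lt (Q.s j) q₂ := by
            intro j hji
            rw [Fin.ext hji]
            exact hlt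
          exact key _ (by simp)
    · exact h.elim
    · exact h.elim
    · exact h
    · exact h.elim
    · -- inl (inr p₁) vs inr ⟨inr q₂⟩
      rcases h with h | ⟨i, hi, hlt⟩
      · left
        rintro ⟨j, hj⟩
        exact h ((par_t_inr_iff P P' p₁).mp ⟨j, hj⟩)
      · right
        refine ⟨⟨m₁ + (i : ℕ), by omega⟩, ?_, ?_⟩
        · rw [par_t_ge P P' _ (by simp), ← hi]
          exact congrArg (fun z => Sum.inr (P'.t z)) (Fin.ext (by simp))
        · rw [par_s_ge Q Q' _ (by simp)]
          have key : ∀ (j : Fin m₂), (j : ℕ) = (i : ℕ) → Q'.lt (Q'.s j) q₂ := by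
            intro j hji
            rw [Fin.ext hji]
            exact hlt
          exact key _ (by simp)
    · exact h.elim
    · exact h.elim
    · exact h
    · exact h.elim
    · exact h.elim
    · exact h.elim
    · exact h.elim
    · exact h
  · -- sources
    intro i
    rw [glue_s']
    by_cases hi : (i : ℕ) < n₁
    · rw [par_s_lt P P' i hi, par_s_lt (P.glue Q) (P'.glue Q') i hi, glue_s']
      rfl
    · rw [par_s_ge P P' i hi, par_s_ge (P.glue Q) (P'.glue Q') i hi, glue_s']
      rfl
  · -- targets
    intro i
    rw [glue_t']
    by_cases hi : (i : ℕ) < k₁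
    · have ht : (Q.par Q').t i = Sum.inl (Q.t ⟨i, hi⟩) := par_t_lt Q Q' i hi
      by_cases hE : ∃ a, Q.s a = Q.t ⟨i, hi⟩
      · have hE' : ∃ j, (Q.par Q').s j = (Q.par Q').t i := by
          rw [ht]; exact (par_s_inl_iff Q Q' _).mpr hE
        rw [dif_pos hE']
        have hcs := hE'.choose_spec.trans ht
        by_cases hcm : (hE'.choose : ℕ) < m₁
        · rw [par_s_lt Q Q' _ hcm] at hcs
          have hqs : Q.s ⟨hE'.choose, hcm⟩ = Q.t ⟨i, hi⟩ := Sum.inl.inj hcs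
          rw [par_t_lt P P' _ hcm,
            par_t_lt (P.glue Q) (P'.glue Q') i hi, glue_t', dif_pos hE]
          have hch : (⟨hE'.choose, hcm⟩ : Fin m₁) = hE.choose :=
            Q.s_inj (by rw [hqs, hE.choose_spec])
          rw [hch]
          rfl
        · rw [par_s_ge Q Q' _ hcm] at hcs
          exact absurd hcs (by simp)
      · have hE' : ¬ ∃ j, (Q.par Q').s j = (Q.par Q').t i := by
          rw [ht]; exact fun h => hE ((par_s_inl_iff Q Q' _).mp h)
        rw [dif_neg hE', par_t_lt (P.glue Q) (P'.glue Q') i hi, glue_t',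
          dif_neg hE]
        have hsub : (Sum.inr ⟨(Q.par Q').t i, hE'⟩ :
            ((P.par P').glue (Q.par Q')).carrier)
            = Sum.inr ⟨Sum.inl (Q.t ⟨i, hi⟩), by rw [← ht]; exact hE'⟩ :=
          congrArg Sum.inr (Subtype.ext ht)
        rw [hsub]
        rfl
    · have ht : (Q.par Q').t i
          = Sum.inr (Q'.t ⟨(i : ℕ) - k₁, by have := i.isLt; omega⟩) :=
        par_t_ge Q Q' i hi
      by_cases hE : ∃ a, Q'.s a = Q'.t ⟨(i : ℕ) - k₁, by have := i.isLt; omega⟩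
      · have hE' : ∃ j, (Q.par Q').s j = (Q.par Q').t i := by
          rw [ht]; exact (par_s_inr_iff Q Q' _).mpr hE
        rw [dif_pos hE']
        have hcs := hE'.choose_spec.trans ht
        by_cases hcm : (hE'.choose : ℕ) < m₁
        · rw [par_s_lt Q Q' _ hcm] at hcs
          exact absurd hcs (by simp)
        · rw [par_s_ge Q Q' _ hcm] at hcs
          have hqs : Q'.s ⟨(hE'.choose : ℕ) - m₁, by
              have := hE'.choose.isLt; omega⟩
              = Q'.t ⟨(i : ℕ) - k₁, by have := i.isLt; omega⟩ :=
            Sum.inr.inj hcs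
          rw [par_t_ge P P' _ hcm,
            par_t_ge (P.glue Q) (P'.glue Q') i hi, glue_t', dif_pos hE]
          have hch : (⟨(hE'.choose : ℕ) - m₁, by
              have := hE'.choose.isLt; omega⟩ : Fin m₂) = hE.choose :=
            Q'.s_inj (by rw [hqs, hE.choose_spec])
          rw [hch]
          rfl
      · have hE' : ¬ ∃ j, (Q.par Q').s j = (Q.par Q').t i := by
          rw [ht]; exact fun h => hE ((par_s_inr_iff Q Q' _).mp h)
        rw [dif_neg hE', par_t_ge (P.glue Q) (P'.glue Q') i hi, glue_t',
          dif_neg hE]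
        have hsub : (Sum.inr ⟨(Q.par Q').t i, hE'⟩ :
            ((P.par P').glue (Q.par Q')).carrier)
            = Sum.inr ⟨Sum.inr (Q'.t ⟨(i : ℕ) - k₁, by have := i.isLt; omega⟩),
                by rw [← ht]; exact hE'⟩ :=
          congrArg Sum.inr (Subtype.ext ht)
        rw [hsub]
        rfl
end

section
/- Strict interchange fails for iposets: the iposet (c * c) ⊗ (c * c) is not isomorphic to (c ⊗ c) * (c ⊗ c), where c denotes the singleton iposet with empty interfaces; the left-hand side is 2+2 (two parallel 2-chains) and the right-hand side is the complete bipartite order on 2+2 points. -/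
/-- The poset `2+2`: two parallel 2-chains. -/
def twoTwoLt : Fin 2 ⊕ Fin 2 → Fin 2 ⊕ Fin 2 → Prop
  | .inl a, .inl b => a < b
  | .inr a, .inr b => a < b
  | _, _ => False

/-- The complete bipartite order on `2+2` points. -/
def bipartiteLt : Fin 2 ⊕ Fin 2 → Fin 2 ⊕ Fin 2 → Prop
  | .inl _, .inr _ => True
  | _, _ => False


section Aux

open Iposet

lemma noFin0 {α : Type} (f : Fin 0 → α) (x : α) : ¬ ∃ j, f j = x :=
  fun ⟨j, _⟩ => j.elim0

/-- abbreviation for the left-hand iposet -/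
noncomputable abbrev lhsIpo := (ipo00.glue ipo00).par (ipo00.glue ipo00)
/-- abbreviation for the right-hand iposet -/
noncomputable abbrev rhsIpo := (ipo00.par ipo00).glue (ipo00.par ipo00)

def eL : lhsIpo.carrier ≃ (Fin 2 ⊕ Fin 2) where
  toFun x := match x with
    | .inl (.inl _) => .inl 0
    | .inl (.inr _) => .inl 1
    | .inr (.inl _) => .inr 0
    | .inr (.inr _) => .inr 1
  invFun z := match z with
    | .inl i => if i.val = 0 then .inl (.inl PUnit.unit)
        else .inl (.inr ⟨PUnit.unit, noFin0 _ _⟩)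
    | .inr i => if i.val = 0 then .inr (.inl PUnit.unit)
        else .inr (.inr ⟨PUnit.unit, noFin0 _ _⟩)
  left_inv x := by
    rcases x with (⟨⟩ | ⟨⟨⟩, h⟩) | (⟨⟩ | ⟨⟨⟩, h⟩) <;> rfl
  right_inv z := by
    rcases z with ⟨i, hi⟩ | ⟨i, hi⟩ <;> interval_cases i <;> rfl

instance : DecidableRel twoTwoLt := fun a b => by
  rcases a with a | a <;> rcases b with b | b <;>
    simp only [twoTwoLt] <;> infer_instance

instance : DecidableRel bipartiteLt := fun a b => by
  rcases a with a | a <;> rcases b with b | b <;>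
    simp only [bipartiteLt] <;> infer_instance

lemma eL_spec : ∀ x y, lhsIpo.lt x y ↔ twoTwoLt (eL x) (eL y) := by
  rintro ((⟨⟩ | ⟨⟨⟩, hx⟩) | (⟨⟩ | ⟨⟨⟩, hx⟩)) ((⟨⟩ | ⟨⟨⟩, hy⟩) | (⟨⟩ | ⟨⟨⟩, hy⟩)) <;>
    first
      | exact iff_of_true (Or.inl (noFin0 _ _)) (by decide : twoTwoLt (Sum.inl 0) (Sum.inl 1))
      | exact iff_of_true (Or.inl (noFin0 _ _)) (by decide : twoTwoLt (Sum.inr 0) (Sum.inr 1))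
      | exact iff_of_false (fun h => h) (by decide : ¬ twoTwoLt (Sum.inl 0) (Sum.inl 0))
      | exact iff_of_false (fun h => h) (by decide : ¬ twoTwoLt (Sum.inl 0) (Sum.inr 0))
      | exact iff_of_false (fun h => h) (by decide : ¬ twoTwoLt (Sum.inl 0) (Sum.inr 1))
      | exact iff_of_false (fun h => h) (by decide : ¬ twoTwoLt (Sum.inl 1) (Sum.inl 0))
      | exact iff_of_false (fun h => h) (by decide : ¬ twoTwoLt (Sum.inl 1) (Sum.inl 1))
      | exact iff_of_false (fun h => h) (by decide : ¬ twoTwoLt (Sum.inl 1) (Sum.inr 0))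
      | exact iff_of_false (fun h => h) (by decide : ¬ twoTwoLt (Sum.inl 1) (Sum.inr 1))
      | exact iff_of_false (fun h => h) (by decide : ¬ twoTwoLt (Sum.inr 0) (Sum.inl 0))
      | exact iff_of_false (fun h => h) (by decide : ¬ twoTwoLt (Sum.inr 0) (Sum.inl 1))
      | exact iff_of_false (fun h => h) (by decide : ¬ twoTwoLt (Sum.inr 0) (Sum.inr 0))
      | exact iff_of_false (fun h => h) (by decide : ¬ twoTwoLt (Sum.inr 1) (Sum.inl 0))
      | exact iff_of_false (fun h => h) (by decide : ¬ twoTwoLt (Sum.inr 1) (Sum.inl 1))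
      | exact iff_of_false (fun h => h) (by decide : ¬ twoTwoLt (Sum.inr 1) (Sum.inr 0))
      | exact iff_of_false (fun h => h) (by decide : ¬ twoTwoLt (Sum.inr 1) (Sum.inr 1))

def eR : rhsIpo.carrier ≃ (Fin 2 ⊕ Fin 2) where
  toFun x := match x with
    | .inl (.inl _) => .inl 0
    | .inl (.inr _) => .inl 1
    | .inr ⟨.inl _, _⟩ => .inr 0
    | .inr ⟨.inr _, _⟩ => .inr 1
  invFun z := match z with
    | .inl i => if i.val = 0 then .inl (.inl PUnit.unit)
        else .inl (.inr PUnit.unit)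
    | .inr i => if i.val = 0 then .inr ⟨.inl PUnit.unit, noFin0 _ _⟩
        else .inr ⟨.inr PUnit.unit, noFin0 _ _⟩
  left_inv x := by
    rcases x with (⟨⟩ | ⟨⟩) | ⟨(⟨⟩ | ⟨⟩), h⟩ <;> rfl
  right_inv z := by
    rcases z with ⟨i, hi⟩ | ⟨i, hi⟩ <;> interval_cases i <;> rfl

lemma eR_spec : ∀ x y, rhsIpo.lt x y ↔ bipartiteLt (eR x) (eR y) := by
  rintro ((⟨⟩ | ⟨⟩) | ⟨(⟨⟩ | ⟨⟩), hx⟩) ((⟨⟩ | ⟨⟩) | ⟨(⟨⟩ | ⟨⟩), hy⟩) <;>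
    first
      | exact iff_of_true (Or.inl (noFin0 _ _)) (by decide : bipartiteLt (Sum.inl 0) (Sum.inr 0))
      | exact iff_of_true (Or.inl (noFin0 _ _)) (by decide : bipartiteLt (Sum.inl 0) (Sum.inr 1))
      | exact iff_of_true (Or.inl (noFin0 _ _)) (by decide : bipartiteLt (Sum.inl 1) (Sum.inr 0))
      | exact iff_of_true (Or.inl (noFin0 _ _)) (by decide : bipartiteLt (Sum.inl 1) (Sum.inr 1))
      | exact iff_of_false (fun h => h) (by decide : ¬ bipartiteLt (Sum.inl 0) (Sum.inl 0))
      | exact iff_of_false (fun h => h) (by decide : ¬ bipartiteLt (Sum.inl 0) (Sum.inl 1))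
      | exact iff_of_false (fun h => h) (by decide : ¬ bipartiteLt (Sum.inl 1) (Sum.inl 0))
      | exact iff_of_false (fun h => h) (by decide : ¬ bipartiteLt (Sum.inl 1) (Sum.inl 1))
      | exact iff_of_false (fun h => h) (by decide : ¬ bipartiteLt (Sum.inr 0) (Sum.inl 0))
      | exact iff_of_false (fun h => h) (by decide : ¬ bipartiteLt (Sum.inr 0) (Sum.inl 1))
      | exact iff_of_false (fun h => h) (by decide : ¬ bipartiteLt (Sum.inr 0) (Sum.inr 0))
      | exact iff_of_false (fun h => h) (by decide : ¬ bipartiteLt (Sum.inr 0) (Sum.inr 1))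
      | exact iff_of_false (fun h => h) (by decide : ¬ bipartiteLt (Sum.inr 1) (Sum.inl 0))
      | exact iff_of_false (fun h => h) (by decide : ¬ bipartiteLt (Sum.inr 1) (Sum.inl 1))
      | exact iff_of_false (fun h => h) (by decide : ¬ bipartiteLt (Sum.inr 1) (Sum.inr 0))
      | exact iff_of_false (fun h => h) (by decide : ¬ bipartiteLt (Sum.inr 1) (Sum.inr 1))

lemma twoTwo_unique : ∀ a b c : Fin 2 ⊕ Fin 2,
    twoTwoLt a b → twoTwoLt a c → b = c := by decide

lemma key : ¬ ∃ g : (Fin 2 ⊕ Fin 2) ≃ (Fin 2 ⊕ Fin 2),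
    ∀ x y, twoTwoLt x y ↔ bipartiteLt (g x) (g y) := by
  rintro ⟨g, hg⟩
  have h1 : twoTwoLt (g.symm (.inl 0)) (g.symm (.inr 0)) := by
    rw [hg, g.apply_symm_apply, g.apply_symm_apply]; trivial
  have h2 : twoTwoLt (g.symm (.inl 0)) (g.symm (.inr 1)) := by
    rw [hg, g.apply_symm_apply, g.apply_symm_apply]; trivial
  have := g.symm.injective (twoTwo_unique _ _ _ h1 h2)
  simp at this

end Aux

open Iposet in
/-- Strict interchange fails for iposets: with `c` the singleton iposet with
empty interfaces, `(c * c) ⊗ (c * c)` (which is `2+2`) is not isomorphic to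
`(c ⊗ c) * (c ⊗ c)` (which is the complete bipartite order on `2+2` points). -/
theorem strict_interchange_fails :
    ¬ Iso ((ipo00.glue ipo00).par (ipo00.glue ipo00))
        ((ipo00.par ipo00).glue (ipo00.par ipo00)) ∧
    (∃ f : ((ipo00.glue ipo00).par (ipo00.glue ipo00)).carrier ≃
        (Fin 2 ⊕ Fin 2),
      ∀ x y, ((ipo00.glue ipo00).par (ipo00.glue ipo00)).lt x y ↔
        twoTwoLt (f x) (f y)) ∧
    (∃ f : ((ipo00.par ipo00).glue (ipo00.par ipo00)).carrier ≃
        (Fin 2 ⊕ Fin 2),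
      ∀ x y, ((ipo00.par ipo00).glue (ipo00.par ipo00)).lt x y ↔
        bipartiteLt (f x) (f y)) := by
  refine ⟨?_, ⟨eL, eL_spec⟩, ⟨eR, eR_spec⟩⟩
  rintro ⟨-, -, f, hf, -, -⟩
  exact key ⟨eL.symm.trans (f.trans eR), fun x y => by
    simpa [Equiv.trans_apply, Equiv.apply_symm_apply] using
      ((eL_spec (eL.symm x) (eL.symm y)).symm.trans
        ((hf _ _).trans (eR_spec _ _)))⟩
end

section
/- For iposets P : n → m and Q : m → k, the underlying poset of P * Q is isomorphic to the underlying poset of Q if and only if P is a starter (i.e., t_P : [m] → P is bijective). -/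
/-! As a set, `P * Q` is `P ⊔ (Q ∖ s_Q[m])`, while `Q` itself is `[m] ⊔ (Q ∖ s_Q[m])`. So a
poset isomorphism forces `|P| = m`, which makes the injective `t_P` bijective; then every point of
`P` is a maximal target point and `P` is discrete. Conversely, for a starter `t_P⁻¹` identifies
`P` with the sources of `Q`, and gluing adds exactly the relations `s_Q i < q` that `Q` already
has. -/

namespace Iposet

variable {n m k : ℕ}

open Classical in
noncomputable def sourceSumEquiv (Q : Iposet m k) :
    Fin m ⊕ {q : Q.carrier // ¬ ∃ j, Q.s j = q} ≃ Q.carrier :=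
  (Equiv.sumCongr (Equiv.ofInjective Q.s Q.s_inj) (Equiv.refl _)).trans
    (Equiv.sumCompl fun q => ∃ j, Q.s j = q)

lemma sourceSumEquiv_inl (Q : Iposet m k) (i : Fin m) : Q.sourceSumEquiv (.inl i) = Q.s i := by
  rfl

lemma sourceSumEquiv_inr (Q : Iposet m k) (q : {q : Q.carrier // ¬ ∃ j, Q.s j = q}) :
    Q.sourceSumEquiv (.inr q) = q.val := by
  rfl

lemma card_carrier_eq_add (Q : Iposet m k) :
    Nat.card Q.carrier = m + Nat.card {q : Q.carrier // ¬ ∃ j, Q.s j = q} := by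
  have := Q.fin
  rw [← Nat.card_congr Q.sourceSumEquiv, Nat.card_sum, Nat.card_fin]

lemma card_glue_carrier (P : Iposet n m) (Q : Iposet m k) :
    Nat.card (P.glue Q).carrier =
      Nat.card P.carrier + Nat.card {q : Q.carrier // ¬ ∃ j, Q.s j = q} := by
  have := P.fin
  have := Q.fin
  exact Nat.card_sum

lemma card_carrier_eq_of_posetIso_glue {P : Iposet n m} {Q : Iposet m k}
    (h : PosetIso (P.glue Q) Q) : Nat.card P.carrier = m := by
  obtain ⟨f, -⟩ := h
  have hcard := Nat.card_congr f
  rw [card_glue_carrier, card_carrier_eq_add Q] at hcard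
  omega

lemma isDiscrete_of_surjective_t {P : Iposet n m} (ht : Function.Surjective P.t) :
    IsDiscrete P := by
  intro x y
  obtain ⟨i, rfl⟩ := ht x
  exact P.t_max i y

lemma isStarter_iff_card_carrier_eq (P : Iposet n m) : IsStarter P ↔ Nat.card P.carrier = m := by
  have := P.fin
  constructor
  · rintro ⟨-, ht⟩
    rw [← Nat.card_congr (Equiv.ofBijective P.t ht), Nat.card_fin]
  · intro hcard
    have ht : Function.Bijective P.t :=
      (Nat.bijective_iff_injective_and_card P.t).2 ⟨P.t_inj, by rw [hcard, Nat.card_fin]⟩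
    exact ⟨isDiscrete_of_surjective_t ht.2, ht⟩

lemma not_glue_lt_inr_inl (P : Iposet n m) (Q : Iposet m k)
    (q : {q : Q.carrier // ¬ ∃ j, Q.s j = q}) (y : P.carrier) :
    ¬ (P.glue Q).lt (.inr q) (.inl y) :=
  id

lemma glue_lt_t_inr (P : Iposet n m) (Q : Iposet m k) (i : Fin m)
    (q : {q : Q.carrier // ¬ ∃ j, Q.s j = q}) :
    (P.glue Q).lt (.inl (P.t i)) (.inr q) ↔ Q.lt (Q.s i) q.val := by
  show (¬ ∃ j, P.t j = P.t i) ∨ (∃ j, P.t j = P.t i ∧ Q.lt (Q.s j) q.val) ↔ _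
  simp [P.t_inj.eq_iff]

noncomputable def glueEquivOfBijective (Q : Iposet m k) {P : Iposet n m}
    (ht : Function.Bijective P.t) : (P.glue Q).carrier ≃ Q.carrier :=
  (Equiv.sumCongr (Equiv.ofBijective P.t ht).symm (Equiv.refl _)).trans Q.sourceSumEquiv

lemma glueEquivOfBijective_t (Q : Iposet m k) {P : Iposet n m} (ht : Function.Bijective P.t)
    (i : Fin m) : glueEquivOfBijective Q ht (.inl (P.t i)) = Q.s i := by
  show Q.sourceSumEquiv (.inl ((Equiv.ofBijective P.t ht).symm (P.t i))) = Q.s i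
  rw [Equiv.ofBijective_symm_apply_apply, sourceSumEquiv_inl]

lemma glueEquivOfBijective_inr (Q : Iposet m k) {P : Iposet n m} (ht : Function.Bijective P.t)
    (q : {q : Q.carrier // ¬ ∃ j, Q.s j = q}) : glueEquivOfBijective Q ht (.inr q) = q.val :=
  rfl

lemma posetIso_glue_of_isStarter {P : Iposet n m} (Q : Iposet m k) (hP : IsStarter P) :
    PosetIso (P.glue Q) Q := by
  obtain ⟨hdisc, ht⟩ := hP
  refine ⟨glueEquivOfBijective Q ht, ?_⟩
  rintro (x | p) (y | q)
  · obtain ⟨i, rfl⟩ := ht.2 x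
    obtain ⟨j, rfl⟩ := ht.2 y
    rw [glueEquivOfBijective_t, glueEquivOfBijective_t]
    exact iff_of_false (hdisc _ _) (Q.s_min j _)
  · obtain ⟨i, rfl⟩ := ht.2 x
    rw [glueEquivOfBijective_t, glueEquivOfBijective_inr]
    exact glue_lt_t_inr P Q i q
  · obtain ⟨j, rfl⟩ := ht.2 y
    rw [glueEquivOfBijective_inr, glueEquivOfBijective_t]
    exact iff_of_false (not_glue_lt_inr_inl P Q p _) (Q.s_min j _)
  · rw [glueEquivOfBijective_inr, glueEquivOfBijective_inr]
    exact Iff.rfl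

end Iposet

open Iposet in
/-- The underlying poset of `P * Q` is isomorphic to that of `Q` iff `P` is
a starter. -/
theorem glue_poset_iso_right_iff_starter {n m k : ℕ}
    (P : Iposet n m) (Q : Iposet m k) :
    PosetIso (P.glue Q) Q ↔ IsStarter P :=
  ⟨fun h => (isStarter_iff_card_carrier_eq P).2 (card_carrier_eq_of_posetIso_glue h),
    posetIso_glue_of_isStarter Q⟩
end

section
/- Every iposet isomorphism (invertible morphism) in the gluing category of iposets is a symmetry: if (s,P,t) : n → n has a left inverse and a right inverse with respect to gluing (with identities the discrete iposets id_n where both interface maps are bijections), then P has exactly n points and both s and t are bijective. -/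
open Iposet in
/-- Every invertible morphism in the gluing category of iposets is a
symmetry: a left- and right-invertible iposet `n → n` has exactly `n` points
and bijective interface maps. -/
theorem invertible_is_symmetry {n : ℕ} (P : Iposet n n)
    (hleft : ∃ Q : Iposet n n, Iso (Q.glue P) (ipoId n))
    (hright : ∃ Q : Iposet n n, Iso (P.glue Q) (ipoId n)) :
    Nat.card P.carrier = n ∧ Function.Bijective P.s ∧
      Function.Bijective P.t := by

  obtain ⟨Q, _, _, f, _⟩ := hleft
  have hPf := P.fin
  have hQf := Q.fin
  -- cardinality of the glued carrier is n
  have hglue : Nat.card (Q.glue P).carrier = n := by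
    have := Nat.card_congr f
    simpa [ipoId] using this
  have hsum : Nat.card Q.carrier +
      Nat.card {p : P.carrier // ¬ ∃ j, P.s j = p} = n := by
    rw [← Nat.card_sum]
    exact hglue
  -- card of source-image subtype is n
  have hrange : Nat.card {p : P.carrier // ∃ j, P.s j = p} = n := by
    have e : {p : P.carrier // ∃ j, P.s j = p} ≃ Fin n :=
      (Equiv.ofInjective P.s P.s_inj).symm
    simp [Nat.card_congr e]
  have hP : Nat.card P.carrier =
      Nat.card {p : P.carrier // ∃ j, P.s j = p} +
        Nat.card {p : P.carrier // ¬ ∃ j, P.s j = p} := by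
    classical
    have e : P.carrier ≃
        {p : P.carrier // ∃ j, P.s j = p} ⊕ {p : P.carrier // ¬ ∃ j, P.s j = p} :=
      (Equiv.sumCompl (fun p => ∃ j, P.s j = p)).symm
    rw [Nat.card_congr e, Nat.card_sum]
  have hQn : n ≤ Nat.card Q.carrier := by
    have := Nat.card_le_card_of_injective Q.s Q.s_inj
    simpa using this
  have hPn : Nat.card P.carrier = n := by omega
  refine ⟨hPn, ?_, ?_⟩
  · rw [Nat.bijective_iff_injective_and_card]
    exact ⟨P.s_inj, by simp [hPn]⟩
  · rw [Nat.bijective_iff_injective_and_card]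
    exact ⟨P.t_inj, by simp [hPn]⟩
end

section
/- Parallel composition of iposets is commutative up to composition with symmetries: for iposets P₁ : n₁ → m₁ and P₂ : n₂ → m₂ there exist symmetries σ : (n₁+n₂) → (n₁+n₂) and τ : (m₁+m₂) → (m₁+m₂) such that P₁ ⊗ P₂ ≅ σ * (P₂ ⊗ P₁) * τ. -/
/-!
Swapping the two summands of the carrier is an order isomorphism `P₁ ⊗ P₂ ≅ P₂ ⊗ P₁`, except
that it renumbers both interfaces by the block flip `finAddFlip`. Such renumberings are realised
by symmetries: gluing the discrete iposet `perm e` in front of `Q` (or behind `P`) yields `Q`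
(or `P`) with its sources (or targets) renumbered along `e`, since every point of `perm e` is
identified with an interface point of the other factor.
-/

namespace Iposet

section Iso

variable {n m n' m' n'' m'' : ℕ} {P : Iposet n m} {Q : Iposet n' m'} {R : Iposet n'' m''}

theorem Iso.symm (h : Iso P Q) : Iso Q P := by
  obtain ⟨rfl, rfl, f, hlt, hs, ht⟩ := h
  refine ⟨rfl, rfl, f.symm, fun x y => ?_, fun i j hij => ?_, fun i j hij => ?_⟩
  · simpa using (hlt (f.symm x) (f.symm y)).symm
  · rw [Equiv.symm_apply_eq, hs j i hij.symm]
  · rw [Equiv.symm_apply_eq, ht j i hij.symm]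

theorem Iso.trans (h₁ : Iso P Q) (h₂ : Iso Q R) : Iso P R := by
  obtain ⟨rfl, rfl, f, hlt, hs, ht⟩ := h₁
  obtain ⟨rfl, rfl, g, hlt', hs', ht'⟩ := h₂
  refine ⟨rfl, rfl, f.trans g, fun x y => (hlt x y).trans (hlt' _ _),
    fun i j hij => ?_, fun i j hij => ?_⟩
  · simp only [Equiv.trans_apply, hs i i rfl, hs' i j hij]
  · simp only [Equiv.trans_apply, ht i i rfl, ht' i j hij]

end Iso

theorem iso_of_equiv {n m : ℕ} {P Q : Iposet n m} (f : P.carrier ≃ Q.carrier)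
    (hlt : ∀ x y, P.lt x y ↔ Q.lt (f x) (f y)) (hs : ∀ i, f (P.s i) = Q.s i)
    (ht : ∀ i, f (P.t i) = Q.t i) : Iso P Q :=
  ⟨rfl, rfl, f, hlt, fun i _ hij => Fin.ext hij ▸ hs i, fun i _ hij => Fin.ext hij ▸ ht i⟩

def reindex {n m n' m' : ℕ} (P : Iposet n m) (e : Fin n' ≃ Fin n) (f : Fin m' ≃ Fin m) :
    Iposet n' m' where
  carrier := P.carrier
  fin := P.fin
  lt := P.lt
  irrefl := P.irrefl
  trans := P.trans
  s := P.s ∘ e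
  t := P.t ∘ f
  s_inj := P.s_inj.comp e.injective
  t_inj := P.t_inj.comp f.injective
  s_min i := P.s_min (e i)
  t_max i := P.t_max (f i)

theorem Iso.reindex {n m n' m' : ℕ} {P Q : Iposet n m} (h : Iso P Q) (e : Fin n' ≃ Fin n)
    (f : Fin m' ≃ Fin m) : Iso (P.reindex e f) (Q.reindex e f) := by
  obtain ⟨-, -, g, hlt, hs, ht⟩ := h
  exact iso_of_equiv g hlt (fun i => hs _ _ rfl) (fun i => ht _ _ rfl)

def perm {n m : ℕ} (e : Fin n ≃ Fin m) : Iposet n m where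
  carrier := Fin n
  fin := inferInstance
  lt _ _ := False
  irrefl _ h := h
  trans _ _ _ h := h.elim
  s := id
  t := e.symm
  s_inj := Function.injective_id
  t_inj := e.symm.injective
  s_min _ _ h := h
  t_max _ _ h := h

theorem perm_isSymmetry {n m : ℕ} (e : Fin n ≃ Fin m) : (perm e).IsSymmetry :=
  ⟨fun _ _ h => h, Function.bijective_id, e.symm.bijective⟩

section Par

variable {n₁ m₁ n₂ m₂ : ℕ} (P : Iposet n₁ m₁) (Q : Iposet n₂ m₂)

@[simp] theorem par_s_castAdd (i : Fin n₁) : (P.par Q).s (Fin.castAdd n₂ i) = .inl (P.s i) := by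
  simp [par]

@[simp] theorem par_s_natAdd (i : Fin n₂) : (P.par Q).s (Fin.natAdd n₁ i) = .inr (Q.s i) := by
  simp [par]

@[simp] theorem par_t_castAdd (i : Fin m₁) : (P.par Q).t (Fin.castAdd m₂ i) = .inl (P.t i) := by
  simp [par]

@[simp] theorem par_t_natAdd (i : Fin m₂) : (P.par Q).t (Fin.natAdd m₁ i) = .inr (Q.t i) := by
  simp [par]

theorem iso_par_reindex_par :
    Iso (P.par Q) ((Q.par P).reindex finAddFlip finAddFlip) := by
  refine iso_of_equiv (Equiv.sumComm _ _) ?_ (fun i => ?_) (fun i => ?_)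
  · rintro (x | x) (y | y) <;> exact Iff.rfl
  · induction i using Fin.addCases <;>
      simp only [reindex, Function.comp_apply, finAddFlip_apply_castAdd,
        finAddFlip_apply_natAdd, par_s_castAdd, par_s_natAdd] <;> rfl
  · induction i using Fin.addCases <;>
      simp only [reindex, Function.comp_apply, finAddFlip_apply_castAdd,
        finAddFlip_apply_natAdd, par_t_castAdd, par_t_natAdd] <;> rfl

end Par

theorem glue_t_eq_inl {n m k : ℕ} (P : Iposet n m) (Q : Iposet m k) {i : Fin k} {j : Fin m}
    (h : Q.s j = Q.t i) : (P.glue Q).t i = .inl (P.t j) := by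
  have hex : ∃ j, Q.s j = Q.t i := ⟨j, h⟩
  have : hex.choose = j := Q.s_inj (hex.choose_spec.trans h.symm)
  simp only [glue, dif_pos hex, this]

theorem glue_t_eq_inr {n m k : ℕ} (P : Iposet n m) (Q : Iposet m k) {i : Fin k}
    (h : ¬ ∃ j, Q.s j = Q.t i) : (P.glue Q).t i = .inr ⟨Q.t i, h⟩ := by
  simp only [glue, dif_neg h]

open Classical in
theorem iso_perm_glue {n m k : ℕ} (e : Fin n ≃ Fin m) (Q : Iposet m k) :
    Iso ((perm e).glue Q) (Q.reindex e (Equiv.refl _)) := by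
  let f : ((perm e).glue Q).carrier ≃ Q.carrier :=
    (Equiv.sumCongr (e.trans (Equiv.ofInjective Q.s Q.s_inj)) (Equiv.refl _)).trans
      (Equiv.sumCompl _)
  refine iso_of_equiv f ?_ (fun i => rfl) (fun i => ?_)
  · rintro (i | p) (j | q)
    · exact iff_of_false id (Q.s_min _ _)
    · refine ⟨?_, fun h => Or.inr ⟨e i, e.symm_apply_apply i, h⟩⟩
      rintro (h | ⟨j, rfl, h⟩)
      · exact (h ⟨e i, e.symm_apply_apply i⟩).elim
      · show Q.lt (Q.s (e (e.symm j))) q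
        rwa [e.apply_symm_apply]
    · exact iff_of_false id (Q.s_min _ _)
    · exact Iff.rfl
  · by_cases h : ∃ j, Q.s j = Q.t i
    · obtain ⟨j, hj⟩ := h
      rw [glue_t_eq_inl _ _ hj]
      show Q.s (e (e.symm j)) = Q.t i
      rw [e.apply_symm_apply, hj]
    · rw [glue_t_eq_inr _ _ h]
      rfl

theorem iso_glue_perm {n m k : ℕ} (P : Iposet n m) (e : Fin m ≃ Fin k) :
    Iso (P.glue (perm e)) (P.reindex (Equiv.refl _) e.symm) := by
  have : IsEmpty {q : (perm e).carrier // ¬ ∃ j, (perm e).s j = q} := ⟨fun q => q.2 ⟨q.1, rfl⟩⟩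
  refine iso_of_equiv (Equiv.sumEmpty _ _) ?_ (fun i => rfl) (fun i => ?_)
  · rintro (x | q) (y | q')
    · exact Iff.rfl
    · exact isEmptyElim q'
    · exact isEmptyElim q
    · exact isEmptyElim q
  · rw [glue_t_eq_inl P (perm e) (j := e.symm i) rfl]
    rfl

end Iposet

open Iposet in
/-- Parallel composition of iposets is commutative up to composition with
symmetries. -/
theorem par_comm_up_to_symmetry {n₁ m₁ n₂ m₂ : ℕ}
    (P₁ : Iposet n₁ m₁) (P₂ : Iposet n₂ m₂) :
    ∃ (σ : Iposet (n₁ + n₂) (n₂ + n₁)) (τ : Iposet (m₂ + m₁) (m₁ + m₂)),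
      IsSymmetry σ ∧ IsSymmetry τ ∧
      Iso (P₁.par P₂) ((σ.glue (P₂.par P₁)).glue τ) := by
  refine ⟨perm finAddFlip, perm finAddFlip.symm, perm_isSymmetry _, perm_isSymmetry _, ?_⟩
  have hσ := (iso_perm_glue finAddFlip (P₂.par P₁)).symm.reindex (Equiv.refl _) finAddFlip
  have hτ := (iso_glue_perm ((perm finAddFlip).glue (P₂.par P₁)) finAddFlip.symm).symm
  exact ((iso_par_reindex_par P₁ P₂).trans hσ).trans hτ
end

section
/- If both interface arities vanish appropriately, parallel composition of iposets commutes strictly: for P₁ : n₁ → m₁ and P₂ : n₂ → m₂ with (n₁ = 0 or n₂ = 0) and (m₁ = 0 or m₂ = 0), one has P₁ ⊗ P₂ ≅ P₂ ⊗ P₁ as iposets. -/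
theorem finSumFinEquiv_symm_cast_add_comm {a b : ℕ} (h : a = 0 ∨ b = 0) (i : Fin (a + b)) :
    finSumFinEquiv.symm (Fin.cast (Nat.add_comm a b) i) = (finSumFinEquiv.symm i).swap := by
  refine Fin.addCases (fun k => ?_) (fun k => ?_) i
  · obtain rfl : b = 0 := h.resolve_left k.pos.ne'
    have hcast : Fin.cast (Nat.add_comm a 0) (Fin.castAdd 0 k) = Fin.natAdd 0 k :=
      Fin.ext (by simp)
    rw [hcast, finSumFinEquiv_symm_apply_castAdd, finSumFinEquiv_symm_apply_natAdd, Sum.swap_inl]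
  · obtain rfl : a = 0 := h.resolve_right k.pos.ne'
    have hcast : Fin.cast (Nat.add_comm 0 b) (Fin.natAdd 0 k) = Fin.castAdd 0 k :=
      Fin.ext (by simp)
    rw [hcast, finSumFinEquiv_symm_apply_castAdd, finSumFinEquiv_symm_apply_natAdd, Sum.swap_inr]

theorem Sum.swap_map_finSumFinEquiv_symm {a b : ℕ} {α β : Type*}
    (f : Fin a → α) (g : Fin b → β) (h : a = 0 ∨ b = 0)
    (i : Fin (a + b)) (j : Fin (b + a)) (hij : (i : ℕ) = j) :
    (Sum.map f g (finSumFinEquiv.symm i)).swap = Sum.map g f (finSumFinEquiv.symm j) := by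
  obtain rfl : j = Fin.cast (Nat.add_comm a b) i := Fin.ext hij.symm
  rw [finSumFinEquiv_symm_cast_add_comm h]
  cases finSumFinEquiv.symm i <;> rfl

namespace Iposet

variable {n₁ m₁ n₂ m₂ : ℕ} (P : Iposet n₁ m₁) (Q : Iposet n₂ m₂)

theorem par_lt_iff_swap (x y : (P.par Q).carrier) :
    (P.par Q).lt x y ↔ (Q.par P).lt x.swap y.swap := by
  rcases x with x | x <;> rcases y with y | y <;> rfl

theorem par_s : (P.par Q).s = Sum.map P.s Q.s ∘ finSumFinEquiv.symm := by
  funext i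
  refine Fin.addCases (fun k => ?_) (fun k => ?_) i <;> simp [par]

theorem par_t : (P.par Q).t = Sum.map P.t Q.t ∘ finSumFinEquiv.symm := by
  funext i
  refine Fin.addCases (fun k => ?_) (fun k => ?_) i <;> simp [par]

end Iposet

open Iposet in
/-- If the interface arities vanish appropriately, parallel composition of
iposets commutes strictly. -/
theorem par_comm_of_empty_interfaces {n₁ m₁ n₂ m₂ : ℕ}
    (P₁ : Iposet n₁ m₁) (P₂ : Iposet n₂ m₂)
    (hn : n₁ = 0 ∨ n₂ = 0) (hm : m₁ = 0 ∨ m₂ = 0) :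
    Iso (P₁.par P₂) (P₂.par P₁) := by
  refine ⟨Nat.add_comm _ _, Nat.add_comm _ _, Equiv.sumComm _ _, par_lt_iff_swap P₁ P₂,
    ?_, ?_⟩
  · intro i j hij
    rw [par_s, par_s]
    exact Sum.swap_map_finSumFinEquiv_symm P₁.s P₂.s hn i j hij
  · intro i j hij
    rw [par_t, par_t]
    exact Sum.swap_map_finSumFinEquiv_symm P₁.t P₂.t hm i j hij
end

section
/- If the parallel composition P₁ ⊗ P₂ of two iposets is isomorphic to a non-trivial gluing Q₁ * Q₂ (i.e., Q₁ is not a starter and Q₂ is not a terminator), then P₁ or P₂ is discrete. -/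
/-! A non-trivial gluing `Q₁ * Q₂` has a pair `u < v` (a non-target point of `Q₁` below a
non-source point of `Q₂`) through which every relation passes, in the sense that `x < y`
forces `u < y` or `x < v`: a relation ending in `Q₂` starts above `u`, and one inside `Q₁`
starts at a non-target point, hence below `v`. Such a pair is invariant under isomorphism.
In a disjoint union `P₁ ⊗ P₂` the pair lies in one component, and a relation in the other
component would have to be related to it across the components, so that component is
discrete. -/

namespace Iposet

variable {n m k n₁ m₁ n₂ m₂ : ℕ}

def IsBottleneck (P : Iposet n m) (a b : P.carrier) : Prop :=
  P.lt a b ∧ ∀ x y, P.lt x y → P.lt a y ∨ P.lt x b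

theorem exists_notMem_range_t_of_not_isStarter {P : Iposet n m} (hP : ¬ IsStarter P) :
    ∃ u, u ∉ Set.range P.t := by
  by_contra! hsurj
  refine hP ⟨fun x y hxy => ?_, P.t_inj, hsurj⟩
  obtain ⟨i, rfl⟩ := hsurj x
  exact P.t_max i y hxy

theorem exists_notMem_range_s_of_not_isTerminator {P : Iposet n m} (hP : ¬ IsTerminator P) :
    ∃ v, v ∉ Set.range P.s := by
  by_contra! hsurj
  refine hP ⟨fun x y hxy => ?_, P.s_inj, hsurj⟩
  obtain ⟨i, rfl⟩ := hsurj y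
  exact P.s_min i x hxy

theorem glue_isBottleneck (P : Iposet n m) (Q : Iposet m k) {u : P.carrier}
    (hu : u ∉ Set.range P.t) {v : Q.carrier} (hv : v ∉ Set.range Q.s) :
    IsBottleneck (P.glue Q) (.inl u) (.inr ⟨v, hv⟩) := by
  refine ⟨Or.inl hu, ?_⟩
  rintro (x | x) (y | y) hxy
  · have hx : x ∉ Set.range P.t := by
      rintro ⟨i, rfl⟩
      exact P.t_max i y hxy
    exact Or.inr (Or.inl hx)
  · exact Or.inl (Or.inl hu)
  · exact hxy.elim
  · exact Or.inl (Or.inl hu)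

theorem Iso.posetIso {P : Iposet n m} {Q : Iposet n₁ m₁} (h : Iso P Q) : PosetIso P Q :=
  let ⟨_, _, f, hf, _⟩ := h
  ⟨f, hf⟩

theorem PosetIso.exists_isBottleneck {P : Iposet n m} {Q : Iposet n₁ m₁} (h : PosetIso P Q)
    {a b : Q.carrier} (hab : IsBottleneck Q a b) : ∃ a' b', IsBottleneck P a' b' := by
  obtain ⟨f, hf⟩ := h
  have hf_symm : ∀ x y, Q.lt x y ↔ P.lt (f.symm x) (f.symm y) := fun x y => by
    simpa using (hf (f.symm x) (f.symm y)).symm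
  refine ⟨f.symm a, f.symm b, (hf_symm a b).1 hab.1, fun x y hxy => ?_⟩
  simpa [hf_symm] using hab.2 (f x) (f y) ((hf x y).1 hxy)

theorem isDiscrete_or_isDiscrete_of_par_isBottleneck {P₁ : Iposet n₁ m₁} {P₂ : Iposet n₂ m₂}
    {a b : (P₁.par P₂).carrier} (hab : IsBottleneck (P₁.par P₂) a b) :
    IsDiscrete P₁ ∨ IsDiscrete P₂ := by
  obtain ⟨hlt, hthrough⟩ := hab
  rcases a with a | a <;> rcases b with b | b
  · exact Or.inr fun x y hxy => (hthrough (.inr x) (.inr y) hxy).elim id id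
  · exact hlt.elim
  · exact hlt.elim
  · exact Or.inl fun x y hxy => (hthrough (.inl x) (.inl y) hxy).elim id id

end Iposet

open Iposet in
/-- If a parallel composition is isomorphic to a non-trivial gluing, then one
of the parallel components is discrete. -/
theorem par_eq_nontrivial_glue_discrete {n₁ m₁ n₂ m₂ a b c : ℕ}
    (P₁ : Iposet n₁ m₁) (P₂ : Iposet n₂ m₂)
    (Q₁ : Iposet a b) (Q₂ : Iposet b c)
    (hQ₁ : ¬ IsStarter Q₁) (hQ₂ : ¬ IsTerminator Q₂)
    (h : Iso (P₁.par P₂) (Q₁.glue Q₂)) :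
    IsDiscrete P₁ ∨ IsDiscrete P₂ := by
  obtain ⟨u, hu⟩ := exists_notMem_range_t_of_not_isStarter hQ₁
  obtain ⟨v, hv⟩ := exists_notMem_range_s_of_not_isTerminator hQ₂
  obtain ⟨_, _, hbottleneck⟩ := h.posetIso.exists_isBottleneck (glue_isBottleneck Q₁ Q₂ hu hv)
  exact isDiscrete_or_isDiscrete_of_par_isBottleneck hbottleneck
end
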